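/- Let h_j and h_s be complex numbers with h_j ≠ h_s. Then the entire functions λ ↦ φ_j(π,λ) and λ ↦ φ_s(π,λ) have no common zeros. -/

import Mathlib

open MeasureTheory Filter Set
open scoped Classical

noncomputable section

/-- Lebesgue measure on `(0, π)`. -/
def mu0 : Measure ℝ := volume.restrict (Set.Ioo (0:ℝ) Real.pi)

/-- A chosen complex square root. -/
def csqrt (l : ℂ) : ℂ := l ^ ((1:ℂ)/2)

/-- `φ(h; λ; x) = cos(√λ x) + h·sin(√λ x)/√λ`, an entire function of `λ`
(the case `λ = 0` is filled in with the limiting value `1 + h x`). -/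
def phi (h l : ℂ) (x : ℝ) : ℂ :=
  if l = 0 then 1 + h * (x:ℂ)
  else Complex.cos (csqrt l * (x:ℂ)) + h * Complex.sin (csqrt l * (x:ℂ)) / csqrt l

/-- `∂φ/∂x`. -/
def phiX (h l : ℂ) (x : ℝ) : ℂ := deriv (fun t : ℝ => phi h l t) x

/-- `∂φ/∂λ`. -/
def phiL (h : ℂ) (x : ℝ) (l : ℂ) : ℂ := deriv (fun u : ℂ => phi h u x) l

/-- The characteristic function `Δ(λ)`. -/
def charFn {m : ℕ} (h : Fin m → ℂ) (p : Fin m → ℝ → ℂ) (l : ℂ) : ℂ :=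
  ∑ j : Fin m, (phiX (h j) l Real.pi + ∫ x in (0:ℝ)..Real.pi, p j x * phi (h j) l x) *
    ∏ s ∈ Finset.univ.erase j, phi (h s) l Real.pi

/-- `f` has a zero of multiplicity exactly `d` at `w`. -/
def ZeroMult (f : ℂ → ℂ) (w : ℂ) (d : ℕ) : Prop :=
  ∃ g : ℂ → ℂ, AnalyticAt ℂ g w ∧ g w ≠ 0 ∧ ∀ᶠ u in nhds w, f u = (u - w) ^ d * g u

/-- `h ∈ ℂ^m_*`: `z 0` is `z₁ = (1/m)∑ hⱼ`, the `z k, k ≠ 0` are the roots of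
`P(z) = d/dz ∏ (z - hⱼ)`, and the `2m-1` numbers `h₁,…,h_m,z₂,…,z_m` are pairwise distinct. -/
def CmStar {m : ℕ} [NeZero m] (h z : Fin m → ℂ) : Prop :=
  z 0 = (∑ j, h j) / (m : ℂ) ∧
  (∀ k : Fin m, k ≠ 0 →
    (Polynomial.derivative (∏ j : Fin m, (Polynomial.X - Polynomial.C (h j)))).eval (z k) = 0) ∧
  Function.Injective h ∧
  Set.InjOn z {k : Fin m | k ≠ 0} ∧
  ∀ j k : Fin m, k ≠ 0 → h j ≠ z k

/-- The asymptotics (*) for a family `{λ_{nk}}`. -/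
def SatAsymp {m : ℕ} [NeZero m] (z : Fin m → ℂ) (Λ : ℕ → Fin m → ℂ) : Prop :=
  ∃ ρ κ : ℕ → Fin m → ℂ,
    Summable (fun q : ℕ × Fin m => ‖κ q.1 q.2‖ ^ 2) ∧
    (∀ n k, (ρ n k) ^ 2 = Λ n k) ∧
    ∀ n : ℕ, 1 ≤ n →
      (ρ n 0 = (n:ℂ) + z 0 / ((Real.pi : ℂ) * n) + κ n 0 / n) ∧
      ∀ k : Fin m, k ≠ 0 →
        ρ n k = (n:ℂ) + 1/2 + z k / ((Real.pi : ℂ) * ((n:ℂ) + 1/2)) + κ n k / (n:ℂ) ^ 2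

/-- The set `Z_h`. -/
def Zh : Set ℂ :=
  { w | ∃ r : ℂ, r ≠ 0 ∧ Complex.sin r = r ∧
        w = -r / (2 * (Real.pi : ℂ)) * (Complex.cos (r/2) / Complex.sin (r/2)) }

/-
`φ(h, λ, x)` is affine in `h`: `φ(h, λ, x) = C(λ, x) + h S(λ, x)` with `C = φ(0, ·, ·)` and
`S = sin(√λ x)/√λ` (`S = x` at `λ = 0`). A common zero of `φ_j(π, ·)` and `φ_s(π, ·)` with
`h_j ≠ h_s` would be a common zero of `C(·, π)` and `S(·, π)`, impossible since
`sin² + cos² = 1` (and `C(0, x) = 1`).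
-/

def phiSin (l : ℂ) (x : ℝ) : ℂ :=
  if l = 0 then (x : ℂ) else Complex.sin (csqrt l * (x : ℂ)) / csqrt l

lemma csqrt_ne_zero {l : ℂ} (hl : l ≠ 0) : csqrt l ≠ 0 := by
  simp [csqrt, Complex.cpow_eq_zero_iff, hl]

lemma phi_eq_phi_zero_add (h l : ℂ) (x : ℝ) : phi h l x = phi 0 l x + h * phiSin l x := by
  unfold phi phiSin
  split_ifs <;> ring

lemma phi_sub_phi (h h' l : ℂ) (x : ℝ) :
    phi h l x - phi h' l x = (h - h') * phiSin l x := by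
  rw [phi_eq_phi_zero_add h, phi_eq_phi_zero_add h']
  ring

lemma phi_zero_ne_zero_of_phiSin_eq_zero {l : ℂ} {x : ℝ} (hS : phiSin l x = 0) :
    phi 0 l x ≠ 0 := by
  unfold phi
  unfold phiSin at hS
  split_ifs with hl
  · simp
  · rw [if_neg hl, div_eq_zero_iff, or_iff_left (csqrt_ne_zero hl)] at hS
    rcases Complex.sin_eq_zero_iff_cos_eq.1 hS with hcos | hcos <;> simp [hS, hcos]

/-- if `hⱼ ≠ h_s`, the entire functions `λ ↦ φⱼ(π,λ)` and `λ ↦ φ_s(π,λ)`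
have no common zeros. -/
theorem statement18 (hj hs : ℂ) (hne : hj ≠ hs) :
    ∀ l : ℂ, ¬(phi hj l Real.pi = 0 ∧ phi hs l Real.pi = 0) := by
  rintro l ⟨hj0, hs0⟩
  have hS : phiSin l Real.pi = 0 := by
    have := phi_sub_phi hj hs l Real.pi
    rw [hj0, hs0, sub_zero, eq_comm, mul_eq_zero, sub_eq_zero] at this
    exact this.resolve_left hne
  rw [phi_eq_phi_zero_add, hS, mul_zero, add_zero] at hj0
  exact phi_zero_ne_zero_of_phiSin_eq_zero hS hj0
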